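/- Let W(V,t) = N(d₁) − (V/(b e^{−a(T−t)}))^{1 − 2(r−q−a)/σ²}·N(d₂) with d₁, d₂ as in the structural credit-bond model. Then W satisfies ∂W/∂t + ½σ²V²∂²W/∂V² + (r−q)V·∂W/∂V = 0 for V > b·e^{−a(T−t)}, 0 < t < T, together with the boundary condition W(b e^{−a(T−t)}, t) = 0 for 0 ≤ t < T. -/

import Mathlib

open Real Set Filter Topology

noncomputable def stdNormalCDF (x : ℝ) : ℝ :=
  (Real.sqrt (2 * Real.pi))⁻¹ * ∫ t in Set.Iic x, Real.exp (-t ^ 2 / 2)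

/-!
In the coordinates `x = log (V / b)`, `τ = T - t`, with drift `μ = r - q - σ² / 2` and
`k = -2 (μ - a) / σ²`, the function `W` becomes `u = N(d₁) - e^{k (x + a τ)} N(d₂)` and the PDE
becomes `-u_τ + σ² / 2 u_xx + μ u_x = 0`. Here `d₂` is `d₁` reflected in `x ↦ -x` with the drift
`μ` replaced by `μ - 2 a`, and the exponential weight is exactly what turns the reflected solution
back into a solution with drift `μ`. All derivatives collapse once one uses the identity
`e^{k (x + a τ)} φ(d₂) = φ(d₁)`. On the barrier `x = -a τ` the weight is `1` and `d₁ = d₂`, so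
`u` vanishes there.
-/

noncomputable section

open MeasureTheory

def stdNormalPDF (x : ℝ) : ℝ := (√(2 * π))⁻¹ * exp (-x ^ 2 / 2)

lemma integrable_exp_neg_sq_div_two : Integrable fun t : ℝ => exp (-t ^ 2 / 2) := by
  simpa [div_eq_inv_mul, neg_mul, mul_comm] using
    integrable_exp_neg_mul_sq (by norm_num : (0 : ℝ) < 1 / 2)

lemma hasDerivAt_stdNormalCDF (x : ℝ) : HasDerivAt stdNormalCDF (stdNormalPDF x) x := by
  have hi := integrable_exp_neg_sq_div_two
  have hsplit : stdNormalCDF = fun y => (√(2 * π))⁻¹ *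
      ((∫ t in Iic 0, exp (-t ^ 2 / 2)) + ∫ t in (0 : ℝ)..y, exp (-t ^ 2 / 2)) := by
    ext y
    rw [stdNormalCDF, ← intervalIntegral.integral_Iic_sub_Iic hi.integrableOn hi.integrableOn]
    ring
  rw [hsplit]
  exact ((intervalIntegral.integral_hasDerivAt_right hi.intervalIntegrable
    hi.aestronglyMeasurable.stronglyMeasurableAtFilter (by fun_prop)).const_add _).const_mul _

lemma hasDerivAt_stdNormalPDF (x : ℝ) : HasDerivAt stdNormalPDF (-x * stdNormalPDF x) x := by
  refine ((((hasDerivAt_pow 2 x).neg.div_const 2).exp).const_mul (√(2 * π))⁻¹).congr_deriv ?_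
  simp only [stdNormalPDF, Pi.neg_apply]
  ring

lemma hasDerivAt_comp_log_div {f : ℝ → ℝ} {f' b V : ℝ} (hb : b ≠ 0) (hV : V ≠ 0)
    (hf : HasDerivAt f f' (log (V / b))) : HasDerivAt (fun v => f (log (v / b))) (f' / V) V := by
  refine (hf.comp V (((hasDerivAt_id V).div_const b).log (div_ne_zero hV hb))).congr_deriv ?_
  simp only [id]
  field_simp

lemma deriv_deriv_comp_log_div {f f' f'' : ℝ → ℝ} {b V : ℝ} (hb : b ≠ 0) (hV : 0 < V)
    (hf : ∀ x, HasDerivAt f (f' x) x) (hf' : ∀ x, HasDerivAt f' (f'' x) x) :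
    deriv (deriv fun v => f (log (v / b))) V =
      (f'' (log (V / b)) - f' (log (V / b))) / V ^ 2 := by
  have hd : deriv (fun v => f (log (v / b))) =ᶠ[𝓝 V] fun v => f' (log (v / b)) / v :=
    eventually_of_mem (Ioi_mem_nhds hV) fun v hv =>
      (hasDerivAt_comp_log_div hb (ne_of_gt hv) (hf _)).deriv
  have h : HasDerivAt (fun v => f' (log (v / b)) / v) _ V :=
    (hasDerivAt_comp_log_div hb hV.ne' (hf' _)).div (hasDerivAt_id V) hV.ne'
  rw [hd.deriv_eq, h.deriv]
  field_simp

namespace BarrierSurvival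

variable (σ μ a : ℝ)

def d₁ (x τ : ℝ) : ℝ := (x + μ * τ) / (σ * √τ)

def d₂ (x τ : ℝ) : ℝ := d₁ σ (μ - 2 * a) (-x) τ

def exponent : ℝ := -2 * (μ - a) / σ ^ 2

def imageWeight (x τ : ℝ) : ℝ := exp (exponent σ μ a * (x + a * τ))

def prob (x τ : ℝ) : ℝ :=
  stdNormalCDF (d₁ σ μ x τ) - imageWeight σ μ a x τ * stdNormalCDF (d₂ σ μ a x τ)

def dxProb (x τ : ℝ) : ℝ :=
  2 * stdNormalPDF (d₁ σ μ x τ) / (σ * √τ) -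
    exponent σ μ a * imageWeight σ μ a x τ * stdNormalCDF (d₂ σ μ a x τ)

def dxxProb (x τ : ℝ) : ℝ :=
  (exponent σ μ a - 2 * d₁ σ μ x τ / (σ * √τ)) * stdNormalPDF (d₁ σ μ x τ) / (σ * √τ) -
    exponent σ μ a ^ 2 * imageWeight σ μ a x τ * stdNormalCDF (d₂ σ μ a x τ)

def dτProb (x τ : ℝ) : ℝ :=
  (a * τ - x) * stdNormalPDF (d₁ σ μ x τ) / (τ * (σ * √τ)) -
    exponent σ μ a * a * imageWeight σ μ a x τ * stdNormalCDF (d₂ σ μ a x τ)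

variable {σ μ a}

lemma imageWeight_mul_stdNormalPDF_d₂ (hσ : σ ≠ 0) {τ : ℝ} (hτ : 0 < τ) (x : ℝ) :
    imageWeight σ μ a x τ * stdNormalPDF (d₂ σ μ a x τ) = stdNormalPDF (d₁ σ μ x τ) := by
  simp only [imageWeight, stdNormalPDF, d₂, d₁, exponent]
  rw [mul_left_comm, ← exp_add]
  congr 2
  field_simp
  rw [sq_sqrt hτ.le]
  ring

lemma hasDerivAt_d₁_x (x τ : ℝ) : HasDerivAt (d₁ σ μ · τ) (1 / (σ * √τ)) x :=
  ((hasDerivAt_id x).add_const _).div_const _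

lemma hasDerivAt_d₁_τ (hσ : σ ≠ 0) (x : ℝ) {τ : ℝ} (hτ : 0 < τ) :
    HasDerivAt (d₁ σ μ x) ((μ * τ - x) / (2 * τ * (σ * √τ))) τ := by
  have hs : √τ ≠ 0 := (sqrt_pos.2 hτ).ne'
  refine ((((hasDerivAt_id τ).const_mul μ).const_add x).div
    ((hasDerivAt_sqrt hτ.ne').const_mul σ) (mul_ne_zero hσ hs)).congr_deriv ?_
  simp only [id]
  field_simp
  rw [sq_sqrt hτ.le]
  ring

lemma hasDerivAt_d₂_x (x τ : ℝ) : HasDerivAt (d₂ σ μ a · τ) (-(1 / (σ * √τ))) x :=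
  ((hasDerivAt_d₁_x (-x) τ).comp x (hasDerivAt_neg x)).congr_deriv (by ring)

lemma hasDerivAt_d₂_τ (hσ : σ ≠ 0) (x : ℝ) {τ : ℝ} (hτ : 0 < τ) :
    HasDerivAt (d₂ σ μ a x) (((μ - 2 * a) * τ + x) / (2 * τ * (σ * √τ))) τ :=
  (hasDerivAt_d₁_τ hσ (-x) hτ).congr_deriv (by ring)

lemma hasDerivAt_imageWeight_x (x τ : ℝ) :
    HasDerivAt (imageWeight σ μ a · τ) (exponent σ μ a * imageWeight σ μ a x τ) x :=
  (((hasDerivAt_id x).add_const (a * τ)).const_mul (exponent σ μ a)).exp.congr_deriv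
    (by simp only [imageWeight, id]; ring)

lemma hasDerivAt_imageWeight_τ (x τ : ℝ) :
    HasDerivAt (imageWeight σ μ a x) (exponent σ μ a * a * imageWeight σ μ a x τ) τ :=
  ((((hasDerivAt_id τ).const_mul a).const_add x).const_mul (exponent σ μ a)).exp.congr_deriv
    (by simp only [imageWeight, id]; ring)

lemma hasDerivAt_prob_x (hσ : σ ≠ 0) {τ : ℝ} (hτ : 0 < τ) (x : ℝ) :
    HasDerivAt (prob σ μ a · τ) (dxProb σ μ a x τ) x := by
  refine (((hasDerivAt_stdNormalCDF _).comp x (hasDerivAt_d₁_x (σ := σ) (μ := μ) x τ)).sub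
    ((hasDerivAt_imageWeight_x x τ).mul
      ((hasDerivAt_stdNormalCDF _).comp x (hasDerivAt_d₂_x x τ)))).congr_deriv ?_
  simp only [dxProb, Function.comp_apply]
  linear_combination (1 / (σ * √τ)) * imageWeight_mul_stdNormalPDF_d₂ hσ hτ x

lemma hasDerivAt_dxProb (hσ : σ ≠ 0) {τ : ℝ} (hτ : 0 < τ) (x : ℝ) :
    HasDerivAt (dxProb σ μ a · τ) (dxxProb σ μ a x τ) x := by
  refine (((((hasDerivAt_stdNormalPDF _).comp x
    (hasDerivAt_d₁_x (σ := σ) (μ := μ) x τ)).const_mul 2).div_const (σ * √τ)).sub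
      (((hasDerivAt_imageWeight_x x τ).const_mul (exponent σ μ a)).mul
        ((hasDerivAt_stdNormalCDF _).comp x (hasDerivAt_d₂_x x τ)))).congr_deriv ?_
  simp only [dxxProb, Function.comp_apply]
  linear_combination (exponent σ μ a / (σ * √τ)) * imageWeight_mul_stdNormalPDF_d₂ hσ hτ x

lemma hasDerivAt_prob_τ (hσ : σ ≠ 0) (x : ℝ) {τ : ℝ} (hτ : 0 < τ) :
    HasDerivAt (prob σ μ a x) (dτProb σ μ a x τ) τ := by
  refine (((hasDerivAt_stdNormalCDF _).comp τ (hasDerivAt_d₁_τ (μ := μ) hσ x hτ)).sub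
    ((hasDerivAt_imageWeight_τ x τ).mul
      ((hasDerivAt_stdNormalCDF _).comp τ (hasDerivAt_d₂_τ hσ x hτ)))).congr_deriv ?_
  simp only [dτProb, Function.comp_apply]
  field_simp
  linear_combination (-((μ - 2 * a) * τ + x)) * imageWeight_mul_stdNormalPDF_d₂ hσ hτ x

lemma kolmogorov_backward (hσ : σ ≠ 0) (x : ℝ) {τ : ℝ} (hτ : 0 < τ) :
    -dτProb σ μ a x τ + σ ^ 2 / 2 * dxxProb σ μ a x τ + μ * dxProb σ μ a x τ = 0 := by
  obtain ⟨s, hs, rfl⟩ : ∃ s, 0 < s ∧ τ = s ^ 2 := ⟨√τ, sqrt_pos.2 hτ, (sq_sqrt hτ.le).symm⟩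
  simp only [dτProb, dxxProb, dxProb, d₁, exponent, sqrt_sq hs.le]
  field_simp
  ring

lemma prob_barrier (τ : ℝ) : prob σ μ a (-a * τ) τ = 0 := by
  have hd : d₂ σ μ a (-a * τ) τ = d₁ σ μ (-a * τ) τ := by
    simp only [d₂, d₁]
    ring_nf
  have hw : imageWeight σ μ a (-a * τ) τ = 1 := by simp [imageWeight]
  rw [prob, hd, hw, one_mul, sub_self]

lemma prob_log_div_pde (hσ : σ ≠ 0) {b T t V : ℝ} (hb : b ≠ 0) (htT : t < T) (hV : 0 < V) :
    deriv (fun s => prob σ μ a (log (V / b)) (T - s)) t +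
      1 / 2 * σ ^ 2 * V ^ 2 * deriv (deriv fun v => prob σ μ a (log (v / b)) (T - t)) V +
      (μ + σ ^ 2 / 2) * V * deriv (fun v => prob σ μ a (log (v / b)) (T - t)) V = 0 := by
  have hτ : 0 < T - t := sub_pos.2 htT
  have ht : HasDerivAt (fun s => prob σ μ a (log (V / b)) (T - s))
      (-dτProb σ μ a (log (V / b)) (T - t)) t :=
    ((hasDerivAt_prob_τ hσ _ hτ).comp t ((hasDerivAt_id t).const_sub T)).congr_deriv (by simp)
  rw [ht.deriv,
    deriv_deriv_comp_log_div hb hV (hasDerivAt_prob_x hσ hτ) (hasDerivAt_dxProb hσ hτ),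
    (hasDerivAt_comp_log_div hb hV.ne' (hasDerivAt_prob_x hσ hτ _)).deriv]
  field_simp
  linear_combination 2 * kolmogorov_backward hσ (log (V / b)) hτ

lemma closedForm_eq_prob (hσ : σ ≠ 0) {b V : ℝ} (hb : 0 < b) (hV : 0 < V) (r q τ : ℝ) :
    stdNormalCDF ((log (V / b) + (r - q - σ ^ 2 / 2) * τ) / (σ * √τ)) -
        (V / (b * exp (-a * τ))) ^ (1 - 2 * (r - q - a) / σ ^ 2) *
          stdNormalCDF ((log (b / V) + (r - q - 2 * a - σ ^ 2 / 2) * τ) / (σ * √τ)) =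
      prob σ (r - q - σ ^ 2 / 2) a (log (V / b)) τ := by
  have hlog : log (V / (b * exp (-a * τ))) = log (V / b) + a * τ := by
    rw [← div_div, log_div (by positivity) (exp_ne_zero _), log_exp]
    ring
  have hk : 1 - 2 * (r - q - a) / σ ^ 2 = -2 * (r - q - σ ^ 2 / 2 - a) / σ ^ 2 := by
    field_simp
    ring
  rw [prob, imageWeight, d₂, d₁, d₁, exponent, rpow_def_of_pos (by positivity), hlog, hk,
    show log (b / V) = -log (V / b) by rw [← log_inv, inv_div]]
  ring_nf

end BarrierSurvival

end

open BarrierSurvival in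
theorem survival_prob_pde_general (r q σ a b T : ℝ) (hσ : 0 < σ) (hb : 0 < b)
    (W : ℝ → ℝ → ℝ)
    (hW : ∀ t < T, ∀ V > 0,
      W V t = stdNormalCDF ((Real.log (V / b) + (r - q - σ ^ 2 / 2) * (T - t)) / (σ * Real.sqrt (T - t))) -
        (V / (b * Real.exp (-a * (T - t)))) ^ (1 - 2 * (r - q - a) / σ ^ 2) *
          stdNormalCDF ((Real.log (b / V) + (r - q - 2 * a - σ ^ 2 / 2) * (T - t)) / (σ * Real.sqrt (T - t)))) :
    (∀ t ∈ Set.Ioo (0 : ℝ) T, ∀ V > b * Real.exp (-a * (T - t)),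
      deriv (fun s => W V s) t +
        (1 / 2) * σ ^ 2 * V ^ 2 * deriv (deriv (fun y => W y t)) V +
        (r - q) * V * deriv (fun y => W y t) V = 0) ∧
    ∀ t, 0 ≤ t → t < T → W (b * Real.exp (-a * (T - t))) t = 0 := by
  set μ := r - q - σ ^ 2 / 2
  have hW' : ∀ t < T, ∀ V > 0, W V t = prob σ μ a (log (V / b)) (T - t) :=
    fun t ht V hV => (hW t ht V hV).trans (closedForm_eq_prob hσ.ne' hb hV r q (T - t))
  refine ⟨fun t ⟨_, htT⟩ V hV => ?_, fun t _ htT => ?_⟩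
  · have hV0 : 0 < V := (by positivity : 0 < b * exp (-a * (T - t))).trans hV
    have hx : (fun y => W y t) =ᶠ[𝓝 V] fun v => prob σ μ a (log (v / b)) (T - t) :=
      eventually_of_mem (Ioi_mem_nhds hV0) fun v hv => hW' t htT v hv
    have ht : (fun s => W V s) =ᶠ[𝓝 t] fun s => prob σ μ a (log (V / b)) (T - s) :=
      eventually_of_mem (Iio_mem_nhds htT) fun s hs => hW' s hs V hV0
    rw [ht.deriv_eq, hx.deriv.deriv_eq, hx.deriv_eq]
    linear_combination prob_log_div_pde hσ.ne' hb.ne' htT hV0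
  · rw [hW' t htT _ (by positivity), mul_div_cancel_left₀ _ hb.ne', log_exp, prob_barrier]

theorem survival_prob_pde (r q σ a b T : ℝ) (hσ : 0 < σ) (hb : 0 < b) (hT : 0 < T)
    (W : ℝ → ℝ → ℝ)
    (hW : ∀ t < T, ∀ V > 0,
      W V t = stdNormalCDF ((Real.log (V / b) + (r - q - σ ^ 2 / 2) * (T - t)) / (σ * Real.sqrt (T - t))) -
        (V / (b * Real.exp (-a * (T - t)))) ^ (1 - 2 * (r - q - a) / σ ^ 2) *
          stdNormalCDF ((Real.log (b / V) + (r - q - 2 * a - σ ^ 2 / 2) * (T - t)) / (σ * Real.sqrt (T - t)))) :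
    (∀ t ∈ Set.Ioo (0 : ℝ) T, ∀ V > b * Real.exp (-a * (T - t)),
      deriv (fun s => W V s) t +
        (1 / 2) * σ ^ 2 * V ^ 2 * deriv (deriv (fun y => W y t)) V +
        (r - q) * V * deriv (fun y => W y t) V = 0) ∧
    ∀ t, 0 ≤ t → t < T → W (b * Real.exp (-a * (T - t))) t = 0 :=
  survival_prob_pde_general r q σ a b T hσ hb W hW
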